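/- Let f : ℤⁿ → ℝ ∪ {+∞} be integrally convex and x* ∈ dom f. Then x* minimizes f over ℤⁿ if and only if f(x*) ≤ f(x* + d) for all d ∈ {−1, 0, +1}ⁿ. -/

import Mathlib

open scoped BigOperators

noncomputable section

/-- Integer neighborhood `N(x)` of a real point. -/
def intNbhd {n : ℕ} (x : Fin n → ℝ) : Set (Fin n → ℤ) :=
  {z | ∀ i, |x i - (z i : ℝ)| < 1}

/-- Local convex extension of `f : ℤⁿ → ℝ ∪ {+∞}`. -/
noncomputable def localExt {n : ℕ} (f : (Fin n → ℤ) → EReal) (x : Fin n → ℝ) : EReal :=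
  sInf { v : EReal | ∃ (m : ℕ) (lam : Fin m → ℝ) (y : Fin m → (Fin n → ℤ)),
      (∀ j, 0 ≤ lam j) ∧ (∑ j, lam j) = 1 ∧ (∀ j, y j ∈ intNbhd x) ∧
      (∀ i, (∑ j, lam j * ((y j i : ℝ))) = x i) ∧
      v = ∑ j, (((lam j : ℝ) : EReal) * f (y j)) }

/-- A function is integrally convex if its local convex extension is convex. -/
def IsIntegrallyConvexFn {n : ℕ} (f : (Fin n → ℤ) → EReal) : Prop :=
  ∀ x y : Fin n → ℝ, ∀ t : ℝ, 0 ≤ t → t ≤ 1 →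
    localExt f (fun i => t * x i + (1 - t) * y i) ≤
      ((t : ℝ) : EReal) * localExt f x + (((1 - t : ℝ)) : EReal) * localExt f y

/-- Coercion of an integer point to a real point. -/
def realify {n : ℕ} (z : Fin n → ℤ) : Fin n → ℝ := fun i => (z i : ℝ)

/-- A set `S ⊆ ℤⁿ` is integrally convex. -/
def IsIntegrallyConvexSet {n : ℕ} (S : Set (Fin n → ℤ)) : Prop :=
  ∀ x : Fin n → ℝ, x ∈ convexHull ℝ (realify '' S) →
    x ∈ convexHull ℝ (realify '' (S ∩ intNbhd x))

/-!
Given `w`, choose `t ∈ (0, 1]` so small that `p = x* + t (w - x*)` lies within sup-distance `1`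
of `x*`. Every integer point of `N(p)` is then a `{-1, 0, 1}`-step from `x*`, so the local
extension satisfies `f(x*) ≤ f̃(p)`; convexity of `f̃` along the segment from `x*` to `w` gives
`f̃(p) ≤ t f(w) + (1 - t) f(x*)`, and these two bounds force `f(x*) ≤ f(w)`.
-/

theorem EReal.le_of_le_mul_add_one_sub_mul {r t : ℝ} {a : EReal} (ht0 : 0 < t)
    (h : (r : EReal) ≤ t * a + (1 - t : ℝ) * r) : (r : EReal) ≤ a := by
  induction a using EReal.rec with
  | bot => simp [EReal.coe_mul_bot_of_pos ht0] at h
  | top => exact le_top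
  | coe s =>
    norm_cast at h ⊢
    nlinarith

theorem EReal.coe_finset_sum {ι : Type*} (s : Finset ι) (g : ι → ℝ) :
    ((∑ i ∈ s, g i : ℝ) : EReal) = ∑ i ∈ s, (g i : EReal) :=
  map_sum (⟨⟨Real.toEReal, EReal.coe_zero⟩, EReal.coe_add⟩ : ℝ →+ EReal) g s

theorem exists_pos_le_one_forall_mul_abs_le_one {ι : Type*} [Fintype ι] (v : ι → ℝ) :
    ∃ t : ℝ, 0 < t ∧ t ≤ 1 ∧ ∀ i, t * |v i| ≤ 1 := by
  have hpos : 0 < 1 + ‖v‖ := by positivity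
  refine ⟨(1 + ‖v‖)⁻¹, inv_pos.2 hpos, inv_le_one_of_one_le₀ (by simp), fun i => ?_⟩
  rw [inv_mul_le_iff₀ hpos]
  have : |v i| ≤ ‖v‖ := by simpa using norm_le_pi_norm v i
  linarith

theorem abs_sub_le_one_of_mem_intNbhd {n : ℕ} {x : Fin n → ℝ} {z y : Fin n → ℤ}
    (hx : ∀ i, |x i - z i| ≤ 1) (hy : y ∈ intNbhd x) (i : Fin n) : |(y - z) i| ≤ 1 := by
  have hlt : |((y i - z i : ℤ) : ℝ)| < 2 := by
    calc |((y i - z i : ℤ) : ℝ)| = |((y i : ℝ) - x i) + (x i - z i)| := by push_cast; ring_nf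
      _ ≤ |(y i : ℝ) - x i| + |x i - z i| := abs_add_le _ _
      _ < 1 + 1 := add_lt_add_of_lt_of_le (by rw [abs_sub_comm]; exact hy i) (hx i)
      _ = 2 := by norm_num
  have : |y i - z i| < 2 := by exact_mod_cast hlt
  simp only [Pi.sub_apply]
  omega

theorem localExt_realify_le {n : ℕ} (f : (Fin n → ℤ) → EReal) (z : Fin n → ℤ) :
    localExt f (realify z) ≤ f z := by
  refine sInf_le ⟨1, fun _ => 1, fun _ => z, fun _ => zero_le_one, by simp, ?_, ?_, by simp⟩ <;>
    intros <;> simp [intNbhd, realify]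

theorem coe_le_localExt {n : ℕ} {f : (Fin n → ℤ) → EReal} {x : Fin n → ℝ} {r : ℝ}
    (h : ∀ y ∈ intNbhd x, (r : EReal) ≤ f y) : (r : EReal) ≤ localExt f x := by
  refine le_sInf ?_
  rintro v ⟨m, lam, y, hlam0, hlam1, hy, -, rfl⟩
  calc (r : EReal) = ((∑ j, lam j * r : ℝ) : EReal) := by rw [← Finset.sum_mul, hlam1, one_mul]
    _ = ∑ j, ((lam j : ℝ) : EReal) * r := by
      rw [EReal.coe_finset_sum]
      simp only [EReal.coe_mul]
    _ ≤ ∑ j, ((lam j : ℝ) : EReal) * f (y j) :=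
      Finset.sum_le_sum fun j _ =>
        mul_le_mul_of_nonneg_left (h _ (hy j)) (EReal.coe_nonneg.2 (hlam0 j))

theorem IsIntegrallyConvexFn.coe_le_of_forall_abs_le_one {n : ℕ} {f : (Fin n → ℤ) → EReal}
    (hf : IsIntegrallyConvexFn f) {z : Fin n → ℤ} {r : ℝ} (hz : f z ≤ r)
    (hloc : ∀ y, (∀ i, |(y - z) i| ≤ 1) → (r : EReal) ≤ f y) (w : Fin n → ℤ) :
    (r : EReal) ≤ f w := by
  obtain ⟨t, ht0, ht1, hsmall⟩ := exists_pos_le_one_forall_mul_abs_le_one (realify w - realify z)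
  set p : Fin n → ℝ := fun i => t * realify w i + (1 - t) * realify z i
  have hpz : ∀ i, |p i - z i| ≤ 1 := fun i => by
    have hp : p i - z i = t * (realify w - realify z) i := by simp only [p, realify, Pi.sub_apply]; ring
    rw [hp, abs_mul, abs_of_pos ht0]
    exact hsmall i
  have hlow : (r : EReal) ≤ localExt f p :=
    coe_le_localExt fun y hy => hloc y (abs_sub_le_one_of_mem_intNbhd hpz hy)
  have hup : localExt f p ≤ t * f w + (1 - t : ℝ) * r :=
    (hf _ _ t ht0.le ht1).trans <| add_le_add
      (mul_le_mul_of_nonneg_left (localExt_realify_le f w) (EReal.coe_nonneg.2 ht0.le))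
      (mul_le_mul_of_nonneg_left ((localExt_realify_le f z).trans hz)
        (EReal.coe_nonneg.2 (by linarith)))
  exact EReal.le_of_le_mul_add_one_sub_mul ht0 (hlow.trans hup)

theorem integrally_convex_local_opt_general {n : ℕ}
    (f : (Fin n → ℤ) → EReal)
    (hf : IsIntegrallyConvexFn f)
    (xstar : Fin n → ℤ) (hdom : f xstar ≠ ⊤) :
    (∀ w : Fin n → ℤ, f xstar ≤ f w) ↔
      (∀ d : Fin n → ℤ, (∀ i, |d i| ≤ 1) → f xstar ≤ f (xstar + d)) := by
  refine ⟨fun hmin d _ => hmin _, fun hloc w => ?_⟩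
  induction hx : f xstar using EReal.rec with
  | bot => exact bot_le
  | top => exact absurd hx hdom
  | coe r =>
    refine hf.coe_le_of_forall_abs_le_one hx.le (fun y hy => ?_) w
    simpa [hx] using hloc (y - xstar) hy

/-- Local characterization of global minimality for integrally convex
functions. -/
theorem integrally_convex_local_opt {n : ℕ}
    (f : (Fin n → ℤ) → EReal) (hbot : ∀ x, f x ≠ ⊥)
    (hf : IsIntegrallyConvexFn f)
    (xstar : Fin n → ℤ) (hdom : f xstar ≠ ⊤) :
    (∀ w : Fin n → ℤ, f xstar ≤ f w) ↔
      (∀ d : Fin n → ℤ, (∀ i, |d i| ≤ 1) → f xstar ≤ f (xstar + d)) :=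
  integrally_convex_local_opt_general f hf xstar hdom
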